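/- arXiv:2302.02002 — 2 statements merged into one kernel-verified Lean document; each statement's English description precedes it below -/
import Mathlib

section
/- Let μ, λ > 0 and p, q, r, s ∈ ℤ with (p, q) ≠ (0, 0) and (r, s) ≠ (0, 0). Set u = (p·μ, q·λ) and v = (r·μ, s·λ) in ℝ². If u and v are orthogonal (i.e., p·r·μ² + q·s·λ² = 0) and ‖u‖·‖v‖ = μ·λ, then either (q = 0, r = 0, |p| = 1, |s| = 1) or (p = 0, s = 0, |q| = 1, |r| = 1). -/
/-!
Write `u = (pμ, qλ)` and `v = (rμ, sλ)`. For orthogonal vectors the Brahmagupta–Fibonacci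
identity reduces to `‖u‖² ‖v‖² = det(u, v)²`, and `det(u, v) = (ps - qr) μλ`, so the length
condition says `|ps - qr| = 1`. Orthogonality, `pr μ² = -qs λ²`, also forces `pr` and `qs` to
have opposite signs, hence `ps · qr = pr · qs ≤ 0`. Two integers of opposite signs at distance
one are `0` and `±1`; and once, say, `|ps| = 1`, the products `pr` and `qs` vanish together,
so `q = r = 0`.
-/

theorem sq_add_sq_mul_sq_add_sq_of_mul_add_mul_eq_zero {R : Type*} [CommRing R] {a b c d : R}
    (h : a * c + b * d = 0) : (a ^ 2 + b ^ 2) * (c ^ 2 + d ^ 2) = (a * d - b * c) ^ 2 := by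
  linear_combination (a * c + b * d) * h

theorem Real.sqrt_mul_sqrt_eq_abs_of_mul_add_mul_eq_zero {a b c d : ℝ} (h : a * c + b * d = 0) :
    √(a ^ 2 + b ^ 2) * √(c ^ 2 + d ^ 2) = |a * d - b * c| := by
  rw [← Real.sqrt_mul (by positivity), sq_add_sq_mul_sq_add_sq_of_mul_add_mul_eq_zero h,
    Real.sqrt_sq_eq_abs]

section MulSqAddMulSq

variable {m n x y : ℝ}

theorem mul_nonpos_of_mul_sq_add_mul_sq_eq_zero (hy : y ≠ 0) (h : m * x ^ 2 + n * y ^ 2 = 0) :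
    m * n ≤ 0 := by
  have hmn : m * n * y ^ 2 = -(m * x) ^ 2 := by linear_combination m * h
  exact nonpos_of_mul_nonpos_left (hmn ▸ neg_nonpos.mpr (sq_nonneg _)) (by positivity)

theorem eq_zero_iff_of_mul_sq_add_mul_sq_eq_zero (hx : x ≠ 0) (hy : y ≠ 0)
    (h : m * x ^ 2 + n * y ^ 2 = 0) : m = 0 ↔ n = 0 := by
  constructor <;> rintro rfl <;> simpa [hx, hy] using h

end MulSqAddMulSq

theorem Int.eq_zero_or_eq_zero_of_abs_sub_eq_one {a b : ℤ} (h : |a - b| = 1) (hab : a * b ≤ 0) :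
    a = 0 ∨ b = 0 := by
  by_contra! hne
  rw [abs_eq zero_le_one] at h
  rcases mul_nonpos_iff.mp hab with ⟨ha, hb⟩ | ⟨ha, hb⟩ <;> omega

theorem Int.abs_eq_one_and_abs_eq_one_of_abs_mul_eq_one {a b : ℤ} (h : |a * b| = 1) :
    |a| = 1 ∧ |b| = 1 := by
  rw [← Int.isUnit_iff_abs_eq, IsUnit.mul_iff] at h
  exact ⟨Int.isUnit_iff_abs_eq.mp h.1, Int.isUnit_iff_abs_eq.mp h.2⟩

theorem Int.eq_zero_and_abs_eq_one_of_abs_det_eq_one {p q r s : ℤ} (hdet : |p * s - q * r| = 1)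
    (hqr : q * r = 0) (hzero : p * r = 0 ↔ q * s = 0) :
    q = 0 ∧ r = 0 ∧ |p| = 1 ∧ |s| = 1 := by
  rw [hqr, sub_zero] at hdet
  obtain ⟨hp, hs⟩ := Int.abs_eq_one_and_abs_eq_one_of_abs_mul_eq_one hdet
  have hp0 : p ≠ 0 := by rintro rfl; simp at hp
  have hs0 : s ≠ 0 := by rintro rfl; simp at hs
  simp only [mul_eq_zero, hp0, hs0, false_or, or_false] at hzero
  rcases mul_eq_zero.mp hqr with rfl | rfl
  · exact ⟨rfl, hzero.mpr rfl, hp, hs⟩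
  · exact ⟨hzero.mp rfl, rfl, hp, hs⟩

theorem Int.diagonal_or_antidiagonal_of_abs_det_eq_one {p q r s : ℤ} (hdet : |p * s - q * r| = 1)
    (hsign : p * r * (q * s) ≤ 0) (hzero : p * r = 0 ↔ q * s = 0) :
    (q = 0 ∧ r = 0 ∧ |p| = 1 ∧ |s| = 1) ∨ (p = 0 ∧ s = 0 ∧ |q| = 1 ∧ |r| = 1) := by
  have hsign' : p * s * (q * r) ≤ 0 := by rwa [show p * s * (q * r) = p * r * (q * s) by ring]
  rcases Int.eq_zero_or_eq_zero_of_abs_sub_eq_one hdet hsign' with hps | hqr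
  · refine .inr (Int.eq_zero_and_abs_eq_one_of_abs_det_eq_one ?_ hps hzero.symm)
    rwa [abs_sub_comm]
  · exact .inl (Int.eq_zero_and_abs_eq_one_of_abs_det_eq_one hdet hqr hzero)

theorem stmt_3_general (μ lam : ℝ) (hμ : 0 < μ) (hlam : 0 < lam) (p q r s : ℤ)
    (horth : (p : ℝ) * r * μ ^ 2 + (q : ℝ) * s * lam ^ 2 = 0)
    (hprod : Real.sqrt (((p : ℝ) * μ) ^ 2 + ((q : ℝ) * lam) ^ 2) *
        Real.sqrt (((r : ℝ) * μ) ^ 2 + ((s : ℝ) * lam) ^ 2) = μ * lam) :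
    (q = 0 ∧ r = 0 ∧ |p| = 1 ∧ |s| = 1) ∨ (p = 0 ∧ s = 0 ∧ |q| = 1 ∧ |r| = 1) := by
  have horth' : ((p * r : ℤ) : ℝ) * μ ^ 2 + ((q * s : ℤ) : ℝ) * lam ^ 2 = 0 := by
    push_cast; exact horth
  have hdet : |((p * s - q * r : ℤ) : ℝ)| * (μ * lam) = μ * lam := calc
    _ = |p * μ * (s * lam) - q * lam * (r * μ)| := by
      rw [← abs_of_pos (mul_pos hμ hlam), ← abs_mul]; push_cast; ring_nf
    _ = μ * lam := by
      rw [← Real.sqrt_mul_sqrt_eq_abs_of_mul_add_mul_eq_zero (by linear_combination horth), hprod]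
  refine Int.diagonal_or_antidiagonal_of_abs_det_eq_one ?_ ?_ ?_
  · exact_mod_cast (mul_eq_right₀ (by positivity)).mp hdet
  · exact_mod_cast mul_nonpos_of_mul_sq_add_mul_sq_eq_zero hlam.ne' horth'
  · exact_mod_cast eq_zero_iff_of_mul_sq_add_mul_sq_eq_zero hμ.ne' hlam.ne' horth'

/-- Core computation of Lemma 3.1: an orthogonal pair `u = (pμ, qλ)`, `v = (rμ, sλ)`
of nonzero lattice vectors whose lengths multiply to `μλ` must coincide, up to sign
and order, with the original basis pair. -/
theorem stmt_3 (μ lam : ℝ) (hμ : 0 < μ) (hlam : 0 < lam) (p q r s : ℤ)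
    (hpq : ¬(p = 0 ∧ q = 0)) (hrs : ¬(r = 0 ∧ s = 0))
    (horth : (p : ℝ) * r * μ ^ 2 + (q : ℝ) * s * lam ^ 2 = 0)
    (hprod : Real.sqrt (((p : ℝ) * μ) ^ 2 + ((q : ℝ) * lam) ^ 2) *
        Real.sqrt (((r : ℝ) * μ) ^ 2 + ((s : ℝ) * lam) ^ 2) = μ * lam) :
    (q = 0 ∧ r = 0 ∧ |p| = 1 ∧ |s| = 1) ∨ (p = 0 ∧ s = 0 ∧ |q| = 1 ∧ |r| = 1) :=
  stmt_3_general μ lam hμ hlam p q r s horth hprod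
end

section
/- Let μ, λ > 0 with p, q, r, s ∈ ℤ, u = (p·μ, q·λ), v = (r·μ, s·λ), u and v orthogonal and both nonzero, and suppose p ≠ 0 and q ≠ 0. Then ‖u‖·‖v‖ > μ·λ. -/
/-! Orthogonality `p r μ² = -q s λ²` with `p, q ≠ 0` forces `r = 0 ↔ s = 0`, so both `r` and `s`
are nonzero. A slope whose two integer coefficients are nonzero is at least as long as the
diagonal `√(μ² + λ²)`, hence `‖u‖‖v‖ ≥ μ² + λ² > μλ`. -/

lemma eq_zero_iff_of_mul_mul_sq_add_mul_mul_sq_eq_zero {μ lam x y z w : ℝ} (hμ : μ ≠ 0)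
    (hlam : lam ≠ 0) (hx : x ≠ 0) (hz : z ≠ 0) (h : x * y * μ ^ 2 + z * w * lam ^ 2 = 0) :
    y = 0 ↔ w = 0 := by
  constructor <;> rintro rfl <;> simpa [hμ, hlam, hx, hz] using h

lemma sq_add_sq_le_intCast_mul_sq_add {a b : ℤ} (ha : a ≠ 0) (hb : b ≠ 0) (x y : ℝ) :
    x ^ 2 + y ^ 2 ≤ ((a : ℝ) * x) ^ 2 + ((b : ℝ) * y) ^ 2 := by
  have ha' : (1 : ℝ) ≤ (a : ℝ) ^ 2 := by
    rw [one_le_sq_iff_one_le_abs]; exact_mod_cast Int.one_le_abs ha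
  have hb' : (1 : ℝ) ≤ (b : ℝ) ^ 2 := by
    rw [one_le_sq_iff_one_le_abs]; exact_mod_cast Int.one_le_abs hb
  rw [mul_pow, mul_pow]
  gcongr <;> exact le_mul_of_one_le_left (sq_nonneg _) ‹_›

theorem stmt_17_general (μ lam : ℝ) (hμ : 0 < μ) (hlam : 0 < lam) (p q r s : ℤ)
    (horth : (p : ℝ) * r * μ ^ 2 + (q : ℝ) * s * lam ^ 2 = 0)
    (hv : ¬(r = 0 ∧ s = 0))
    (hp : p ≠ 0) (hq : q ≠ 0) :
    μ * lam < Real.sqrt (((p : ℝ) * μ) ^ 2 + ((q : ℝ) * lam) ^ 2) *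
        Real.sqrt (((r : ℝ) * μ) ^ 2 + ((s : ℝ) * lam) ^ 2) := by
  have hrs : r = 0 ↔ s = 0 := by
    simpa only [Int.cast_eq_zero] using
      eq_zero_iff_of_mul_mul_sq_add_mul_mul_sq_eq_zero hμ.ne' hlam.ne'
        (Int.cast_ne_zero.mpr hp) (Int.cast_ne_zero.mpr hq) horth
  have hr : r ≠ 0 := fun hr => hv ⟨hr, hrs.mp hr⟩
  have hs : s ≠ 0 := fun hs => hv ⟨hrs.mpr hs, hs⟩
  calc μ * lam < μ ^ 2 + lam ^ 2 := by nlinarith [sq_nonneg (μ - lam), mul_pos hμ hlam]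
    _ = Real.sqrt (μ ^ 2 + lam ^ 2) * Real.sqrt (μ ^ 2 + lam ^ 2) :=
      (Real.mul_self_sqrt (by positivity)).symm
    _ ≤ _ := by
      gcongr √?_ * √?_
      · exact sq_add_sq_le_intCast_mul_sq_add hp hq μ lam
      · exact sq_add_sq_le_intCast_mul_sq_add hr hs μ lam

/-- If the slope `u = (pμ, qλ)` has both coefficients nonzero, then for any nonzero
orthogonal slope `v = (rμ, sλ)` the product of lengths strictly exceeds `μλ`. -/
theorem stmt_17 (μ lam : ℝ) (hμ : 0 < μ) (hlam : 0 < lam) (p q r s : ℤ)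
    (horth : (p : ℝ) * r * μ ^ 2 + (q : ℝ) * s * lam ^ 2 = 0)
    (hu : ¬(p = 0 ∧ q = 0)) (hv : ¬(r = 0 ∧ s = 0))
    (hp : p ≠ 0) (hq : q ≠ 0) :
    μ * lam < Real.sqrt (((p : ℝ) * μ) ^ 2 + ((q : ℝ) * lam) ^ 2) *
        Real.sqrt (((r : ℝ) * μ) ^ 2 + ((s : ℝ) * lam) ^ 2) :=
  stmt_17_general μ lam hμ hlam p q r s horth hv hp hq
end
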